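/- arXiv:1904.07183 — 7 statements merged into one kernel-verified Lean document; each statement's English description precedes it below -/
import Mathlib

section
/- If G is a connected simple graph with at least three vertices such that |N(u) ∩ N(v)| ≥ 2 for every pair of vertices u, v at distance 2, then G is 2-connected. -/
/-!
Deleting a vertex `v` can only disconnect `G` if two neighbours `a`, `d` of `v` fall into
different components of `G ⊖ v`, since any other walk avoids `v`. Non-adjacent distinct
neighbours of `v` are at distance 2, so by hypothesis they have a second common neighbour
`w ≠ v`, and `a - w - d` survives in `G ⊖ v`. Hence every detour through `v` can be rerouted.
-/

open SimpleGraph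

namespace SimpleGraph

variable {V : Type*} {G : SimpleGraph V} {v a b : V}

local notation:max G " ⊖ " v:max => Subgraph.deleteVerts (⊤ : Subgraph G) ({v} : Set _)

lemma dist_eq_two_of_adj_of_adj (hab : a ≠ b) (hnadj : ¬ G.Adj a b) (hav : G.Adj a v)
    (hvb : G.Adj v b) : G.dist a b = 2 := by
  have hv : v ∈ G.commonNeighbors a b := G.mem_commonNeighbors.mpr ⟨hav, hvb.symm⟩
  rw [dist, edist_eq_two_iff.mpr ⟨hab, hnadj, v, hv⟩]
  rfl

namespace Subgraph

lemma mem_deleteVerts_top_singleton {x : V} : x ∈ (G ⊖ v).verts ↔ x ≠ v := by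
  simp

lemma coe_deleteVerts_top_adj (ha : a ∈ (G ⊖ v).verts) (hb : b ∈ (G ⊖ v).verts)
    (hab : G.Adj a b) :
    (G ⊖ v).coe.Adj ⟨a, ha⟩ ⟨b, hb⟩ :=
  deleteVerts_adj.mpr ⟨trivial, mem_deleteVerts_top_singleton.mp ha, trivial,
    mem_deleteVerts_top_singleton.mp hb, hab⟩

/-- The induction runs along a walk of `G`, carrying the stronger claim that when the current
vertex is `v` itself, every neighbour of `v` already reaches the endpoint in `G ⊖ v`. -/
lemma reachable_deleteVerts_top_singleton
    (hN : ∀ a b (ha : a ∈ (G ⊖ v).verts) (hb : b ∈ (G ⊖ v).verts), G.Adj a v → G.Adj v b →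
      (G ⊖ v).coe.Reachable ⟨a, ha⟩ ⟨b, hb⟩)
    (p : G.Walk a b) (ha : a ∈ (G ⊖ v).verts) (hb : b ∈ (G ⊖ v).verts) :
    (G ⊖ v).coe.Reachable ⟨a, ha⟩ ⟨b, hb⟩ := by
  suffices key : ∀ {x b} (q : G.Walk x b) (hb : b ∈ (G ⊖ v).verts) (y : V)
      (hy : y ∈ (G ⊖ v).verts), (y = x ∨ x = v ∧ G.Adj y v) →
      (G ⊖ v).coe.Reachable ⟨y, hy⟩ ⟨b, hb⟩ from
    key p hb a ha (.inl rfl)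
  intro x b q
  induction q with
  | nil =>
    rintro hb y hy (rfl | ⟨rfl, -⟩)
    · rfl
    · exact absurd rfl (mem_deleteVerts_top_singleton.mp hb)
  | @cons x c _ hxc q ih =>
    intro hb y hy hyx
    by_cases hc : c = v
    · rcases hyx with rfl | ⟨rfl, -⟩
      · exact ih hb y hy (.inr ⟨hc, hc ▸ hxc⟩)
      · exact absurd hc (G.ne_of_adj hxc).symm
    have hc' : c ∈ (G ⊖ v).verts := mem_deleteVerts_top_singleton.mpr hc
    refine Reachable.trans ?_ (ih hb c hc' (.inl rfl))
    rcases hyx with rfl | ⟨rfl, hyv⟩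
    · exact (coe_deleteVerts_top_adj hy hc' hxc).reachable
    · exact hN y c hy hc' hyv hxc

lemma connected_coe_deleteVerts_top_singleton [Nontrivial V] (hconn : G.Connected)
    (hN : ∀ a b (ha : a ∈ (G ⊖ v).verts) (hb : b ∈ (G ⊖ v).verts), G.Adj a v → G.Adj v b →
      (G ⊖ v).coe.Reachable ⟨a, ha⟩ ⟨b, hb⟩) :
    (G ⊖ v).coe.Connected := by
  obtain ⟨x, hx⟩ := exists_ne v
  have : Nonempty (G ⊖ v).verts := ⟨⟨x, mem_deleteVerts_top_singleton.mpr hx⟩⟩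
  exact .mk fun ⟨a, ha⟩ ⟨b, hb⟩ => reachable_deleteVerts_top_singleton hN (hconn a b).some ha hb

lemma reachable_deleteVerts_top_singleton_of_adj_of_adj
    (h2 : ∀ u w : V, G.dist u w = 2 → 2 ≤ (G.neighborSet u ∩ G.neighborSet w).ncard)
    (ha : a ∈ (G ⊖ v).verts) (hb : b ∈ (G ⊖ v).verts) (hav : G.Adj a v) (hvb : G.Adj v b) :
    (G ⊖ v).coe.Reachable ⟨a, ha⟩ ⟨b, hb⟩ := by
  by_cases hab : a = b
  · subst hab; rfl
  by_cases hadj : G.Adj a b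
  · exact (coe_deleteVerts_top_adj ha hb hadj).reachable
  obtain ⟨w, ⟨haw, hbw⟩, hwv⟩ := Set.exists_ne_of_one_lt_ncard
    (h2 a b (dist_eq_two_of_adj_of_adj hab hadj hav hvb)) v
  have hw := mem_deleteVerts_top_singleton (G := G).mpr hwv
  exact (coe_deleteVerts_top_adj ha hw haw).reachable.trans
    (coe_deleteVerts_top_adj hw hb (G.adj_symm hbw)).reachable

end Subgraph

end SimpleGraph

theorem stmt1 {V : Type*} (G : SimpleGraph V) (hconn : G.Connected)
    (hcard : 3 ≤ ENat.card V)
    (h2 : ∀ u v : V, G.dist u v = 2 →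
      2 ≤ (G.neighborSet u ∩ G.neighborSet v).ncard) :
    ∀ v : V, ((⊤ : G.Subgraph).deleteVerts {v}).coe.Connected := by
  intro v
  have : Nontrivial V :=
    (ENat.one_lt_card_iff_nontrivial V).mp (lt_of_lt_of_le (by norm_num) hcard)
  exact Subgraph.connected_coe_deleteVerts_top_singleton hconn fun a b ha hb hav hvb =>
    Subgraph.reachable_deleteVerts_top_singleton_of_adj_of_adj h2 ha hb hav hvb
end

section
/- Let G be a bipartite L1-graph and let u and v be adjacent vertices in G. Then |d(u) − d(v)| ≤ 1. -/
/-!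
Suppose `d(u) ≥ 2` and pick a neighbour `x ≠ v` of `u`. Since `G` is triangle-free, `v` and `x`
are at distance 2 with common neighbour `u`, and `N(u)` is disjoint from `N(x)`. The `L₁`
condition for the triple `(v, x, u)` then gives `d(x) + d(u) - 1 ≤ |N(v) ∪ N(x) ∪ N(u)| - 1 ≤
d(v) + d(x)`, that is `d(u) ≤ d(v) + 1`.
-/

open SimpleGraph

/-- `G` is an `L₁`-graph: `d(u) + d(v) ≥ |N(u) ∪ N(v) ∪ N(w)| - 1` for every
triple `u, v, w` with `d(u,v) = 2` and `w` a common neighbor of `u` and `v`. -/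
def IsL1Graph {V : Type*} (G : SimpleGraph V) : Prop :=
  ∀ u v w : V, G.dist u v = 2 → G.Adj u w → G.Adj v w →
    (G.neighborSet u ∪ G.neighborSet v ∪ G.neighborSet w).ncard - 1 ≤
      (G.neighborSet u).ncard + (G.neighborSet v).ncard

namespace SimpleGraph

variable {V : Type*} {G : SimpleGraph V} {a b c : V}

lemma dist_eq_two_of_adj_of_adj_s2 (hab : G.Adj a b) (hbc : G.Adj b c) (hne : a ≠ c)
    (hac : ¬G.Adj a c) : G.dist a c = 2 :=
  let p : G.Walk a c := .cons hab (.cons hbc .nil)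
  le_antisymm (G.dist_le p) (p.reachable.one_lt_dist_of_ne_of_not_adj hne hac)

lemma CliqueFree.not_adj_of_adj_of_adj (h : G.CliqueFree 3) (hab : G.Adj a b) (hac : G.Adj a c)
    (hne : b ≠ c) : ¬G.Adj b c :=
  isIndepSet_neighborSet_of_triangleFree G h a hab hac hne

lemma CliqueFree.disjoint_neighborSet_of_adj (h : G.CliqueFree 3) (hab : G.Adj a b) :
    Disjoint (G.neighborSet a) (G.neighborSet b) :=
  Set.disjoint_left.2 fun _ hya hyb => h.not_adj_of_adj_of_adj hya.symm hyb.symm hab.ne hab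

lemma IsL1Graph.ncard_neighborSet_le_succ_of_adj (hL1 : IsL1Graph G) (h3 : G.CliqueFree 3)
    (hfin : ∀ x, (G.neighborSet x).Finite) {u v : V} (huv : G.Adj u v) :
    (G.neighborSet u).ncard ≤ (G.neighborSet v).ncard + 1 := by
  have hv_pos : 0 < (G.neighborSet v).ncard := (Set.ncard_pos (hfin v)).2 ⟨u, huv.symm⟩
  by_cases hu : (G.neighborSet u).ncard ≤ 1
  · omega
  obtain ⟨x, hux, hxv⟩ := Set.exists_ne_of_one_lt_ncard (not_le.1 hu) v
  have hux : G.Adj u x := hux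
  have hdist : G.dist v x = 2 :=
    dist_eq_two_of_adj_of_adj_s2 huv.symm hux (Ne.symm hxv)
      (h3.not_adj_of_adj_of_adj huv hux hxv.symm)
  have hL := hL1 v x u hdist huv.symm hux.symm
  have hunion : (G.neighborSet x).ncard + (G.neighborSet u).ncard ≤
      (G.neighborSet v ∪ G.neighborSet x ∪ G.neighborSet u).ncard := by
    rw [← Set.ncard_union_eq (h3.disjoint_neighborSet_of_adj hux).symm (hfin x) (hfin u)]
    exact Set.ncard_le_ncard (Set.union_subset_union_left _ Set.subset_union_right)
      (((hfin v).union (hfin x)).union (hfin u))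
  omega

end SimpleGraph

theorem stmt2 {V : Type*} (G : SimpleGraph V)
    (hlf : ∀ x : V, (G.neighborSet x).Finite)
    (hbip : G.Colorable 2) (hL1 : IsL1Graph G)
    (u v : V) (huv : G.Adj u v) :
    |((G.neighborSet u).ncard : ℤ) - ((G.neighborSet v).ncard : ℤ)| ≤ 1 := by
  have h3 : G.CliqueFree 3 := hbip.cliqueFree (by norm_num)
  have huv_le := hL1.ncard_neighborSet_le_succ_of_adj h3 hlf huv
  have hvu_le := hL1.ncard_neighborSet_le_succ_of_adj h3 hlf huv.symm
  rw [abs_le]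
  constructor <;> omega
end

section
/- In a claw-free graph G, for every triple of vertices u, w, v with d(u,v) = 2 and w ∈ N(u) ∩ N(v), the inequality d(u) + d(v) ≥ |N(u) ∪ N(v) ∪ N(w)| holds if and only if |N(u) ∩ N(v)| ≥ 2. -/
/-!
Claw-freeness at `w` forces every neighbour of `w` other than `u, v` into `N(u) ∪ N(v)`, since
`u` and `v` are non-adjacent. Hence `N(u) ∪ N(v) ∪ N(w)` is the disjoint union of `N(u) ∪ N(v)`
and `{u, v}`, of size `d(u) + d(v) - |N(u) ∩ N(v)| + 2`.
-/

open SimpleGraph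

/-- A graph is claw-free if it has no induced subgraph isomorphic to `K_{1,3}`. -/
def ClawFree {V : Type*} (G : SimpleGraph V) : Prop :=
  IsEmpty (completeBipartiteGraph (Fin 1) (Fin 3) ↪g G)

section

variable {V : Type*} {G : SimpleGraph V}

theorem ClawFree.adj_of_not_adj (hG : ClawFree G)
    {w a b c : V} (ha : G.Adj w a) (hb : G.Adj w b) (hc : G.Adj w c)
    (hab : a ≠ b) (hac : a ≠ c) (hbc : b ≠ c)
    (hnab : ¬ G.Adj a b) (hnac : ¬ G.Adj a c) : G.Adj b c := by
  by_contra hnbc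
  let f : Fin 1 ⊕ Fin 3 → V := Sum.elim (fun _ => w) ![a, b, c]
  have hf : f.Injective := by
    rintro (i | i) (j | j) h <;> fin_cases i <;> (try fin_cases j) <;>
      simp_all [f, ha.ne, hb.ne, hc.ne, ha.ne.symm, hb.ne.symm, hc.ne.symm]
  refine hG.false ⟨⟨f, hf⟩, fun {x y} => ?_⟩
  change G.Adj (f x) (f y) ↔ _
  rcases x with i | i <;> rcases y with j | j <;> fin_cases i <;> fin_cases j <;>
    simp_all [f, G.adj_comm]

theorem ClawFree.neighborSet_subset_of_adj_of_adj (hG : ClawFree G) {u v w : V}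
    (huv : u ≠ v) (hnuv : ¬ G.Adj u v) (hu : G.Adj u w) (hv : G.Adj v w) :
    G.neighborSet w ⊆ G.neighborSet u ∪ G.neighborSet v ∪ {u, v} := by
  intro x hx
  by_contra hx'
  simp only [Set.mem_union, Set.mem_insert_iff, Set.mem_singleton_iff, mem_neighborSet,
    not_or] at hx'
  obtain ⟨⟨hnux, hnvx⟩, hxu, hxv⟩ := hx'
  exact hnvx (hG.adj_of_not_adj hu.symm hv.symm hx huv (Ne.symm hxu) (Ne.symm hxv) hnuv hnux)

theorem ClawFree.neighborSet_union_eq_of_adj_of_adj (hG : ClawFree G) {u v w : V}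
    (huv : u ≠ v) (hnuv : ¬ G.Adj u v) (hu : G.Adj u w) (hv : G.Adj v w) :
    G.neighborSet u ∪ G.neighborSet v ∪ G.neighborSet w =
      G.neighborSet u ∪ G.neighborSet v ∪ {u, v} := by
  have hpair : ({u, v} : Set V) ⊆ G.neighborSet w := by
    simp [Set.insert_subset_iff, hu.symm, hv.symm]
  exact le_antisymm
    (Set.union_subset Set.subset_union_left (hG.neighborSet_subset_of_adj_of_adj huv hnuv hu hv))
    (Set.union_subset_union_right _ hpair)

theorem SimpleGraph.disjoint_neighborSet_union_pair {u v : V} (hnuv : ¬ G.Adj u v) :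
    Disjoint (G.neighborSet u ∪ G.neighborSet v) {u, v} := by
  rw [Set.disjoint_right]
  rintro x (rfl | rfl) (hx | hx)
  exacts [hx.ne rfl, hnuv hx.symm, hnuv hx, hx.ne rfl]
end

theorem stmt5 {V : Type*} (G : SimpleGraph V)
    (hlf : ∀ x : V, (G.neighborSet x).Finite)
    (hclaw : ClawFree G)
    (u w v : V) (hdist : G.dist u v = 2) (hu : G.Adj u w) (hv : G.Adj v w) :
    (G.neighborSet u ∪ G.neighborSet v ∪ G.neighborSet w).ncard ≤
      (G.neighborSet u).ncard + (G.neighborSet v).ncard ↔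
    2 ≤ (G.neighborSet u ∩ G.neighborSet v).ncard := by
  have huv : u ≠ v := by
    rintro rfl
    simp at hdist
  have hnuv : ¬ G.Adj u v := fun h => by
    simp [dist_eq_one_iff_adj.mpr h] at hdist
  rw [hclaw.neighborSet_union_eq_of_adj_of_adj huv hnuv hu hv,
    Set.ncard_union_eq (disjoint_neighborSet_union_pair hnuv) ((hlf u).union (hlf v)),
    Set.ncard_pair huv, ← Set.ncard_union_add_ncard_inter _ _ (hlf u) (hlf v)]
  omega
end

section
/- Every claw-free graph is an L1-graph. -/
open SimpleGraph

/-! In a claw-free graph every neighbour of the middle vertex `w` of an induced path `u w v` is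
adjacent to `u` or `v` (or is one of them), so `N(w) ⊆ N(u) ∪ N(v) ∪ {u, v}`. Hence
`|N(u) ∪ N(v) ∪ N(w)| ≤ |N(u) ∪ N(v)| + 2 ≤ d(u) + d(v) + 1`, the last step because `w` is a
common neighbour of `u` and `v`. -/

theorem Set.ncard_union_union_sub_one_le {α : Type*} {A B C : Set α} {a b : α}
    (hC : C ⊆ A ∪ B ∪ {a, b}) (hAB : (A ∩ B).Nonempty) :
    (A ∪ B ∪ C).ncard - 1 ≤ A.ncard + B.ncard := by
  by_cases hfin : A.Finite ∧ B.Finite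
  · obtain ⟨hA, hB⟩ := hfin
    have hsub : A ∪ B ∪ C ⊆ A ∪ B ∪ {a, b} := Set.union_subset Set.subset_union_left hC
    have hpair : ({a, b} : Set α).ncard ≤ 2 := by
      simpa using Set.ncard_insert_le a ({b} : Set α)
    have hle : (A ∪ B ∪ C).ncard ≤ (A ∪ B).ncard + 2 := calc
      (A ∪ B ∪ C).ncard ≤ (A ∪ B ∪ {a, b}).ncard :=
        Set.ncard_le_ncard hsub ((hA.union hB).union (Set.toFinite _))
      _ ≤ (A ∪ B).ncard + ({a, b} : Set α).ncard := Set.ncard_union_le _ _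
      _ ≤ (A ∪ B).ncard + 2 := by omega
    have hinter := hAB.ncard_pos (hA.inter_of_left B)
    have := Set.ncard_union_add_ncard_inter A B hA hB
    omega
  · have hinf : (A ∪ B ∪ C).Infinite := fun h ↦
      hfin ⟨h.subset (Set.subset_union_left.trans Set.subset_union_left),
        h.subset (Set.subset_union_right.trans Set.subset_union_left)⟩
    simp [hinf.ncard]

namespace ClawFree

variable {V : Type*} {G : SimpleGraph V}

theorem adj_or_adj_or_adj (h : ClawFree G) {w a b c : V}
    (ha : G.Adj w a) (hb : G.Adj w b) (hc : G.Adj w c)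
    (hab : a ≠ b) (hac : a ≠ c) (hbc : b ≠ c) :
    G.Adj a b ∨ G.Adj a c ∨ G.Adj b c := by
  by_contra! hind
  obtain ⟨nab, nac, nbc⟩ := hind
  let f : Fin 1 ⊕ Fin 3 → V := Sum.elim (fun _ ↦ w) ![a, b, c]
  have hinj : Function.Injective f := by
    rintro (i | i) (j | j) hij <;> fin_cases i <;> try fin_cases j
    all_goals simp_all [f, ha.ne, hb.ne, hc.ne, ha.ne', hb.ne', hc.ne']
  refine h.false ⟨⟨f, hinj⟩, ?_⟩
  rintro (i | i) (j | j) <;> fin_cases i <;> try fin_cases j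
  all_goals simp_all [f, G.adj_comm]

theorem neighborSet_subset (h : ClawFree G) {u v w : V}
    (hu : G.Adj w u) (hv : G.Adj w v) (huv : u ≠ v) (hnadj : ¬G.Adj u v) :
    G.neighborSet w ⊆ G.neighborSet u ∪ G.neighborSet v ∪ {u, v} := by
  intro x hx
  by_contra hxn
  simp only [Set.mem_union, Set.mem_insert_iff, Set.mem_singleton_iff, mem_neighborSet,
    not_or] at hx hxn
  obtain ⟨⟨hux, hvx⟩, hxu, hxv⟩ := hxn
  rcases h.adj_or_adj_or_adj hu hv hx huv (Ne.symm hxu) (Ne.symm hxv) with h | h | h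
  exacts [hnadj h, hux h, hvx h]

end ClawFree

theorem stmt6_general {V : Type*} (G : SimpleGraph V)
    (hclaw : ClawFree G) : IsL1Graph G := by
  intro u v w hdist huw hvw
  have huv : u ≠ v := by
    rintro rfl
    simp at hdist
  have hnadj : ¬G.Adj u v := fun h ↦ by
    rw [(dist_eq_one_iff_adj).2 h] at hdist
    omega
  exact Set.ncard_union_union_sub_one_le
    (hclaw.neighborSet_subset huw.symm hvw.symm huv hnadj) ⟨w, huw, hvw⟩

theorem stmt6 {V : Type*} (G : SimpleGraph V)
    (hlf : ∀ x : V, (G.neighborSet x).Finite)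
    (hclaw : ClawFree G) : IsL1Graph G :=
  stmt6_general G hclaw
end

section
/- Every graph in the family K = { G : K_{p,p+1} ⊆ G ⊆ K_p ∨ \overline{K_{p+1}} for some p ≥ 2 } contains, for every cycle C of length n < |V(G)| − 1, a cycle of length n+1 or n+2 containing all vertices of C. -/
/-
A closed walk of length `n` meets a set containing no two consecutive vertices of it in at most
`n / 2` vertices: each such vertex starts one of the `n` darts and ends another, and no dart does
both. The `p + 1` right vertices are pairwise non-adjacent and `n < 2p`, so some right vertex `r`
lies off the cycle. If the cycle uses an edge between two left vertices, `r` can be inserted into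
it. Otherwise the cycle alternates, so some left vertex `l` lies off it as well, and any edge `uv`
of the cycle can be replaced by the path `u r l v` or `u l r v`.
-/

open SimpleGraph

/-- The join `K_p ∨ \overline{K_{p+1}}`. -/
def KpJoinEmpty (p : ℕ) : SimpleGraph (Fin p ⊕ Fin (p + 1)) where
  Adj x y := x ≠ y ∧ (x.isLeft ∨ y.isLeft)
  symm := ⟨by rintro x y ⟨h1, h2⟩; exact ⟨h1.symm, h2.symm⟩⟩
  loopless := ⟨by rintro x ⟨h1, _⟩; exact h1 rfl⟩

open Finset

theorem List.countP_add_countP_le_length {α : Type*} {p q : α → Bool} {l : List α}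
    (h : ∀ x ∈ l, ¬(p x ∧ q x)) : l.countP p + l.countP q ≤ l.length := by
  rw [l.length_eq_countP_add_countP p]
  exact Nat.add_le_add_left (List.countP_mono_left fun x hx hq => by simpa [hq] using h x hx) _

namespace SimpleGraph.Walk

variable {V : Type*} {G : SimpleGraph V}

theorem two_mul_countP_tail_support_le_length {u : V} (c : G.Walk u u) (P : V → Bool)
    (hP : ∀ d ∈ c.darts, ¬(P d.fst ∧ P d.snd)) :
    2 * c.support.tail.countP P ≤ c.length := by
  have hfst : c.darts.countP (fun d => P d.fst) = c.support.tail.countP P := by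
    rw [c.tail_support_perm_dropLast_support.countP_eq, ← map_fst_darts, List.countP_map]
    rfl
  have hsnd : c.darts.countP (fun d => P d.snd) = c.support.tail.countP P := by
    rw [← map_snd_darts, List.countP_map]
    rfl
  rw [← length_darts, two_mul]
  nth_rw 1 [← hfst]
  rw [← hsnd]
  exact List.countP_add_countP_le_length hP

theorem exists_mem_notMem_support_of_length_lt [DecidableEq V] {u : V} {c : G.Walk u u}
    (hc : ¬c.Nil) (S : Finset V) (hS : ∀ d ∈ c.darts, ¬(d.fst ∈ S ∧ d.snd ∈ S))
    (hlen : c.length < 2 * #S) : ∃ x ∈ S, x ∉ c.support := by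
  by_contra! hsub
  have hcard : #S ≤ c.support.tail.countP (· ∈ S) := by
    rw [List.countP_eq_length_filter]
    refine (Finset.card_le_card fun x hx => ?_).trans (List.toFinset_card_le _)
    have : x ∈ c.support.tail := by
      rcases List.mem_cons.mp (c.cons_tail_support ▸ hsub x hx) with rfl | h
      · exact end_mem_tail_support hc
      · exact h
    simpa [this] using hx
  have := c.two_mul_countP_tail_support_le_length (· ∈ S) (by simpa using hS)
  omega

theorem IsCycle.append_comm {u v : V} {p : G.Walk u v} {q : G.Walk v u}
    (h : (p.append q).IsCycle) : (q.append p).IsCycle := by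
  rw [isCycle_def, isTrail_def, edges_append, tail_support_append] at h ⊢
  obtain ⟨htrail, hne, hnodup⟩ := h
  refine ⟨List.perm_append_comm.nodup_iff.mp htrail, fun hnil => hne ?_,
    List.perm_append_comm.nodup_iff.mp hnodup⟩
  have := congrArg length hnil
  rw [eq_nil_iff_nil, ← length_eq_zero_iff]
  simp only [length_append, length_nil] at this ⊢
  omega

theorem exists_eq_append_cons_of_mem_darts :
    ∀ {u v : V} {p : G.Walk u v} {d : G.Dart}, d ∈ p.darts →
      ∃ (q : G.Walk u d.fst) (r : G.Walk d.snd v), p = q.append (cons d.adj r)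
  | _, _, nil, _, hd => by simp at hd
  | _, _, cons h p, d, hd => by
    rcases List.mem_cons.mp hd with rfl | hd
    · exact ⟨nil, p, rfl⟩
    · obtain ⟨q, r, rfl⟩ := exists_eq_append_cons_of_mem_darts hd
      exact ⟨cons h q, r, rfl⟩

theorem IsCycle.exists_isPath_of_mem_darts {u : V} {c : G.Walk u u} (hc : c.IsCycle)
    {d : G.Dart} (hd : d ∈ c.darts) :
    ∃ P : G.Walk d.snd d.fst, P.IsPath ∧ P.length + 1 = c.length ∧
      ∀ x, x ∈ P.support ↔ x ∈ c.support := by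
  obtain ⟨q, r, rfl⟩ := exists_eq_append_cons_of_mem_darts hd
  have hrot : (cons d.adj (r.append q)).IsCycle := by
    simpa only [cons_append] using hc.append_comm
  refine ⟨r.append q, ((cons_isCycle_iff _ _).mp hrot).1, ?_, fun x => ?_⟩
  · simp only [length_append, length_cons]
    omega
  · simp only [mem_support_append_iff, support_cons, List.mem_cons]
    refine ⟨by tauto, ?_⟩
    rintro (h | rfl | h)
    exacts [.inr h, .inr q.end_mem_support, .inl h]

theorem IsPath.isCycle_cons_cons {u v x : V} {P : G.Walk u v} (hP : P.IsPath) (huv : u ≠ v)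
    (hx : x ∉ P.support) (h₁ : G.Adj v x) (h₂ : G.Adj x u) :
    (cons h₁ (cons h₂ P)).IsCycle := by
  refine (cons_isCycle_iff _ _).mpr ⟨hP.cons hx, ?_⟩
  rw [edges_cons, List.mem_cons, not_or, Sym2.eq_iff]
  refine ⟨?_, fun h => hx (P.snd_mem_support_of_mem_edges h)⟩
  rintro (⟨hvx, -⟩ | ⟨hvu, -⟩)
  exacts [h₁.ne hvx, huv hvu.symm]

theorem IsCycle.exists_isCycle_of_adj_of_mem_darts {u x : V} {c : G.Walk u u} (hc : c.IsCycle)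
    {d : G.Dart} (hd : d ∈ c.darts) (hx : x ∉ c.support)
    (h₁ : G.Adj d.fst x) (h₂ : G.Adj x d.snd) :
    ∃ (b : V) (c' : G.Walk b b), c'.IsCycle ∧ c'.length = c.length + 1 ∧
      ∀ y ∈ c.support, y ∈ c'.support := by
  obtain ⟨P, hP, hlen, hsupp⟩ := hc.exists_isPath_of_mem_darts hd
  refine ⟨_, cons h₁ (cons h₂ P), hP.isCycle_cons_cons d.adj.ne.symm (by rwa [hsupp]) h₁ h₂,
    by simp only [length_cons]; omega, fun y hy => by simp [hsupp, hy]⟩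

theorem IsCycle.exists_isCycle_of_adj_adj_of_mem_darts {u x y : V} {c : G.Walk u u}
    (hc : c.IsCycle) {d : G.Dart} (hd : d ∈ c.darts) (hx : x ∉ c.support) (hy : y ∉ c.support)
    (hxy : x ≠ y) (h₁ : G.Adj d.fst x) (h₂ : G.Adj x y) (h₃ : G.Adj y d.snd) :
    ∃ (b : V) (c' : G.Walk b b), c'.IsCycle ∧ c'.length = c.length + 2 ∧
      ∀ z ∈ c.support, z ∈ c'.support := by
  obtain ⟨P, hP, hlen, hsupp⟩ := hc.exists_isPath_of_mem_darts hd
  have hyd : y ≠ d.fst := fun h => hy (h ▸ c.dart_fst_mem_support_of_mem_darts hd)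
  have hxP : x ∉ (cons h₃ P).support := by simp [hsupp, hx, hxy]
  refine ⟨_, cons h₁ (cons h₂ (cons h₃ P)),
    (hP.cons (by rwa [hsupp])).isCycle_cons_cons hyd hxP h₁ h₂,
    by simp only [length_cons]; omega, fun z hz => by simp [hsupp, hz]⟩

end SimpleGraph.Walk

open Walk

section Sum

variable {α β : Type*} {G : SimpleGraph (α ⊕ β)} {a : α ⊕ β}
  {C : G.Walk a a}

theorem exists_inl_notMem_support [Fintype α] (hC : C.IsCycle)
    (hLL : ¬∃ d ∈ C.darts, d.fst.isLeft ∧ d.snd.isLeft) (hn : C.length < 2 * Fintype.card α) :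
    ∃ i, Sum.inl i ∉ C.support := by
  classical
  have hL : ∀ d ∈ C.darts, ¬(d.fst ∈ univ.map .inl ∧ d.snd ∈ univ.map .inl) := by
    rintro d hd ⟨h₁, h₂⟩
    simp only [Finset.mem_map, Finset.mem_univ, true_and, Function.Embedding.inl_apply] at h₁ h₂
    obtain ⟨⟨i, hi⟩, ⟨j, hj⟩⟩ := And.intro h₁ h₂
    exact hLL ⟨d, hd, by simp [← hi], by simp [← hj]⟩
  obtain ⟨_, hx, hl⟩ :=
    exists_mem_notMem_support_of_length_lt hC.not_nil _ hL (by simpa using hn)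
  obtain ⟨i, -, rfl⟩ := Finset.mem_map.mp hx
  exact ⟨i, hl⟩

theorem exists_inr_notMem_support [Fintype β] (hC : C.IsCycle)
    (hRR : ∀ j j', ¬G.Adj (Sum.inr j) (Sum.inr j')) (hn : C.length < 2 * Fintype.card β) :
    ∃ j, Sum.inr j ∉ C.support := by
  classical
  have hR : ∀ d ∈ C.darts, ¬(d.fst ∈ univ.map .inr ∧ d.snd ∈ univ.map .inr) := by
    rintro d - ⟨h₁, h₂⟩
    simp only [Finset.mem_map, Finset.mem_univ, true_and, Function.Embedding.inr_apply] at h₁ h₂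
    obtain ⟨⟨i, hi⟩, ⟨j, hj⟩⟩ := And.intro h₁ h₂
    exact hRR i j (hi ▸ hj ▸ d.adj)
  obtain ⟨_, hx, hr⟩ :=
    exists_mem_notMem_support_of_length_lt hC.not_nil _ hR (by simpa using hn)
  obtain ⟨j, -, rfl⟩ := Finset.mem_map.mp hx
  exact ⟨j, hr⟩

end Sum

theorem stmt10_general (p : ℕ) (G : SimpleGraph (Fin p ⊕ Fin (p + 1)))
    (hlow : completeBipartiteGraph (Fin p) (Fin (p + 1)) ≤ G)
    (hhigh : G ≤ KpJoinEmpty p)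
    (a : Fin p ⊕ Fin (p + 1)) (C : G.Walk a a) (hC : C.IsCycle)
    (hn : C.length < (2 * p + 1) - 1) :
    ∃ (b : Fin p ⊕ Fin (p + 1)) (C' : G.Walk b b), C'.IsCycle ∧
      (C'.length = C.length + 1 ∨ C'.length = C.length + 2) ∧
      ∀ x ∈ C.support, x ∈ C'.support := by
  obtain ⟨j, hj⟩ := exists_inr_notMem_support hC (fun _ _ h => by simpa using (hhigh h).2)
    (by simp only [Fintype.card_fin]; omega)
  by_cases hLL : ∃ d ∈ C.darts, d.fst.isLeft ∧ d.snd.isLeft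
  · obtain ⟨⟨⟨u, v⟩, huv⟩, hd, hu, hv⟩ := hLL
    obtain ⟨i₁, rfl⟩ := Sum.isLeft_iff.mp hu
    obtain ⟨i₂, rfl⟩ := Sum.isLeft_iff.mp hv
    obtain ⟨b, C', hC', hlen, hsupp⟩ :=
      hC.exists_isCycle_of_adj_of_mem_darts hd hj (hlow (by simp)) (hlow (by simp))
    exact ⟨b, C', hC', .inl hlen, hsupp⟩
  obtain ⟨i, hi⟩ := exists_inl_notMem_support hC hLL (by simpa using hn)
  obtain ⟨⟨⟨u, v⟩, huv⟩, hd⟩ : ∃ d, d ∈ C.darts :=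
    List.exists_mem_of_ne_nil _ (darts_eq_nil.not.mpr hC.not_nil)
  have hleft : u.isLeft ∨ v.isLeft := (hhigh huv).2
  rcases u with i₁ | j₁ <;> rcases v with i₂ | j₂
  · exact absurd ⟨_, hd, rfl, rfl⟩ hLL
  · obtain ⟨b, C', hC', hlen, hsupp⟩ := hC.exists_isCycle_of_adj_adj_of_mem_darts hd hj hi
      (by simp) (hlow (by simp)) (hlow (by simp)) (hlow (by simp))
    exact ⟨b, C', hC', .inr hlen, hsupp⟩
  · obtain ⟨b, C', hC', hlen, hsupp⟩ := hC.exists_isCycle_of_adj_adj_of_mem_darts hd hi hj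
      (by simp) (hlow (by simp)) (hlow (by simp)) (hlow (by simp))
    exact ⟨b, C', hC', .inr hlen, hsupp⟩
  · simp at hleft

theorem stmt10 (p : ℕ) (hp : 2 ≤ p) (G : SimpleGraph (Fin p ⊕ Fin (p + 1)))
    (hlow : completeBipartiteGraph (Fin p) (Fin (p + 1)) ≤ G)
    (hhigh : G ≤ KpJoinEmpty p)
    (a : Fin p ⊕ Fin (p + 1)) (C : G.Walk a a) (hC : C.IsCycle)
    (hn : C.length < (2 * p + 1) - 1) :
    ∃ (b : Fin p ⊕ Fin (p + 1)) (C' : G.Walk b b), C'.IsCycle ∧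
      (C'.length = C.length + 1 ∨ C'.length = C.length + 2) ∧
      ∀ x ∈ C.support, x ∈ C'.support :=
  stmt10_general p G hlow hhigh a C hC hn
end

section
/- Let G be a connected graph with at least three vertices such that |N(u) ∩ N(v)| ≥ 2 for each pair of vertices u, v at distance 2. Then every vertex of G lies on a cycle of length 3 or 4. -/
/-!
Every vertex `x` has two distinct neighbours `u`, `v`: otherwise `x` has a single neighbour `y`,
connectivity and `|V| ≥ 3` give a further neighbour `z` of `y`, and then `d(x, z) = 2` while `y`
is the only common neighbour of `x` and `z`. If `u` and `v` are adjacent, `xuv` is a triangle;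
if not, `d(u, v) = 2`, so `u` and `v` have a common neighbour `w ≠ x` and `xuwv` is a 4-cycle.
-/

open SimpleGraph

namespace SimpleGraph

variable {V : Type*} {G : SimpleGraph V} {x u v w : V}

lemma dist_eq_two_of_mem_commonNeighbors (huv : u ≠ v) (hadj : ¬G.Adj u v)
    (hw : w ∈ G.commonNeighbors u v) : G.dist u v = 2 := by
  rw [dist, edist_eq_two_iff.mpr ⟨huv, hadj, w, hw⟩]
  rfl

lemma Walk.isCycle_triangle (hxu : G.Adj x u) (huv : G.Adj u v) (hvx : G.Adj v x) :
    (cons hxu (cons huv (cons hvx nil))).IsCycle := by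
  simp [Walk.cons_isCycle_iff, huv.ne, hvx.ne, hxu.ne', hvx.ne', hxu.ne]

lemma Walk.isCycle_square (hxu : G.Adj x u) (huw : G.Adj u w) (hwv : G.Adj w v)
    (hvx : G.Adj v x) (huv : u ≠ v) (hwx : w ≠ x) :
    (cons hxu (cons huw (cons hwv (cons hvx nil)))).IsCycle := by
  simp [Walk.cons_isCycle_iff, huv, hwx, hwx.symm, huw.ne, hwv.ne, hvx.ne, hxu.ne', hvx.ne']

lemma Preconnected.exists_adj_leaving_pair (hconn : G.Preconnected) (hcard : 3 ≤ ENat.card V)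
    (x y : V) : ∃ a b, G.Adj a b ∧ (a = x ∨ a = y) ∧ b ≠ x ∧ b ≠ y := by
  obtain ⟨w, hwx, hwy⟩ := ENat.exists_ne_ne_of_three_le hcard x y
  obtain ⟨d, -, hd, hd'⟩ :=
    (hconn x w).some.exists_boundary_dart {x, y} (by simp) (by simp [hwx, hwy])
  exact ⟨d.fst, d.snd, d.adj, hd, by simpa [not_or] using hd'⟩

lemma Preconnected.exists_adj_adj_ne (hconn : G.Preconnected) (hcard : 3 ≤ ENat.card V)
    (hcommon : ∀ u v, G.dist u v = 2 → 2 ≤ (G.commonNeighbors u v).ncard) (x : V) :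
    ∃ u v, G.Adj x u ∧ G.Adj x v ∧ u ≠ v := by
  by_contra! hx
  obtain ⟨a, y, hay, ha, -⟩ := hconn.exists_adj_leaving_pair hcard x x
  have hxy : G.Adj x y := ha.elim (· ▸ hay) (· ▸ hay)
  obtain ⟨b, z, hbz, hb | hb, hzx, hzy⟩ := hconn.exists_adj_leaving_pair hcard x y
  · exact hzy (hx _ _ (hb ▸ hbz) hxy)
  subst b
  have hxz : ¬G.Adj x z := fun h ↦ hzy (hx _ _ h hxy)
  have hlower := hcommon x z (dist_eq_two_of_mem_commonNeighbors hzx.symm hxz ⟨hxy, hbz.symm⟩)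
  have hsub : G.commonNeighbors x z ⊆ {y} := fun c hc ↦ hx _ _ hc.1 hxy
  have hupper := (Set.ncard_le_ncard hsub).trans_eq (Set.ncard_singleton y)
  omega

end SimpleGraph

theorem stmt16 {V : Type*} (G : SimpleGraph V)
    (hconn : G.Connected) (hcard : 3 ≤ ENat.card V)
    (h2 : ∀ u v : V, G.dist u v = 2 →
      2 ≤ (G.neighborSet u ∩ G.neighborSet v).ncard) :
    ∀ x : V, ∃ (a : V) (C : G.Walk a a), C.IsCycle ∧ x ∈ C.support ∧
      (C.length = 3 ∨ C.length = 4) := by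
  intro x
  obtain ⟨u, v, hxu, hxv, huv⟩ := hconn.preconnected.exists_adj_adj_ne hcard h2 x
  by_cases hadj : G.Adj u v
  · exact ⟨x, _, Walk.isCycle_triangle hxu hadj hxv.symm, by simp, Or.inl rfl⟩
  · have hd := dist_eq_two_of_mem_commonNeighbors huv hadj ⟨hxu.symm, hxv.symm⟩
    obtain ⟨w, ⟨hwu, hwv⟩, hwx⟩ := Set.exists_ne_of_one_lt_ncard (h2 u v hd) x
    exact ⟨x, _, Walk.isCycle_square hxu hwu hwv.symm hxv.symm huv hwx, by simp, Or.inr rfl⟩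
end

section
/- Let G be a connected bipartite L1-graph with maximum degree greater than 2. Then either G is a complete bipartite graph K_{n,n}, or G is obtained from some K_{n,n} by removing a single vertex, a single edge, or a perfect matching. -/
open SimpleGraph

/-- The complete bipartite graph `K_{n,n}` with a perfect matching removed. -/
def KnnMinusMatching (n : ℕ) : SimpleGraph (Fin n ⊕ Fin n) where
  Adj x y :=
    match x, y with
    | Sum.inl i, Sum.inr j => i ≠ j
    | Sum.inr i, Sum.inl j => i ≠ j
    | _, _ => False
  symm := by
    constructor
    rintro (i | i) (j | j) h
    · exact h
    · exact fun hij => h hij.symm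
    · exact fun hij => h hij.symm
    · exact h
  loopless := by constructor; rintro (i | i) h <;> exact h

/-- The complete bipartite graph `K_{n+1,n+1}` with a single edge
(the edge `inl 0 – inr 0`) removed. -/
def KnnMinusEdge (n : ℕ) : SimpleGraph (Fin (n + 1) ⊕ Fin (n + 1)) :=
  (completeBipartiteGraph (Fin (n + 1)) (Fin (n + 1))).deleteEdges
    {s(Sum.inl 0, Sum.inr 0)}


/-!
Fix a 2-colouring. If `u ≠ v` have the same colour and a common neighbour `w`, the neighbourhoods
of `u` and `v` avoid that of `w`, so the `L₁` condition reads `deg w ≤ |N(u) ∩ N(v)| + 1`.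
Along a geodesic `p₀ p₁ p₂ p₃ p₄` this forces `p₁, p₂, p₃` to have degree `2`, and the geodesic
can be slid along every further edge at `p₀`; by connectivity every vertex would then have degree
at most `2`. Hence there is no such geodesic: two vertices of one colour always have a common
neighbour, the graph is finite, and each vertex misses at most one vertex of the other colour.
So `G` is `K_{a,b}` minus a matching `M`, and the same inequality, now a statement about `a`, `b`
and `M`, gives `|a - b| ≤ 1` if `M = ∅`, `a = b` if `|M| = 1`, and `M` perfect if `|M| ≥ 2`.
-/

theorem Set.exists_equiv_fin_apply_eq_zero {α : Type*} {s : Set α} [Finite s] {n : ℕ}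
    (hs : s.ncard = n + 1) (a : s) : ∃ e : s ≃ Fin (n + 1), e a = 0 := by
  let e₀ : s ≃ Fin (n + 1) := (Finite.equivFin s).trans (finCongr hs)
  exact ⟨e₀.trans (Equiv.swap (e₀ a) 0), by simp⟩

namespace SimpleGraph

variable {V : Type*} {G : SimpleGraph V}

theorem exists_adj_adj_of_dist_eq_two {u v : V} (h : G.dist u v = 2) :
    ∃ w, G.Adj u w ∧ G.Adj w v := by
  have hr : G.Reachable u v := Reachable.of_dist_ne_zero (by omega)
  have : G.edist u v = 2 := by rw [← hr.coe_dist_eq_edist, h]; rfl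
  obtain ⟨w, hw⟩ := (edist_eq_two_iff.mp this).2.2
  exact ⟨w, (G.mem_commonNeighbors.mp hw).1, (G.mem_commonNeighbors.mp hw).2.symm⟩

namespace Coloring

variable (c : G.Coloring Bool)

@[simp]
theorem mem_colorClass_iff {b : Bool} {x : V} : x ∈ c.colorClass b ↔ c x = b :=
  Iff.rfl

theorem eq_of_ne_of_adj {x y z : V} (hxy : c x ≠ c y) (hyz : G.Adj y z) : c x = c z := by
  have := c.valid hyz
  revert hxy this
  cases c x <;> cases c y <;> cases c z <;> simp

theorem eq_of_adj_of_adj {x y z : V} (hxy : G.Adj x y) (hyz : G.Adj y z) : c x = c z :=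
  c.eq_of_ne_of_adj (c.valid hxy) hyz

theorem even_dist_iff {u v : V} (h : G.Reachable u v) : Even (G.dist u v) ↔ c u = c v := by
  obtain ⟨p, hp⟩ := h.exists_walk_length_eq_dist
  rw [← hp, c.even_length_iff_congr p, ← Bool.eq_iff_iff]

end Coloring

theorem _root_.IsL1Graph.ncard_neighborSet_le_commonNeighbors (hL1 : IsL1Graph G)
    (hlf : ∀ x, (G.neighborSet x).Finite) (c : G.Coloring Bool) {u v w : V} (hne : u ≠ v)
    (huv : c u = c v) (hw : w ∈ G.commonNeighbors u v) :
    (G.neighborSet w).ncard ≤ (G.commonNeighbors u v).ncard + 1 := by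
  obtain ⟨huw, hvw⟩ := G.mem_commonNeighbors.mp hw
  have hdist : G.dist u v = 2 := by
    have h1 := (huw.reachable.trans hvw.symm.reachable).one_lt_dist_of_ne_of_not_adj hne
      fun h => c.valid h huv
    have h2 := dist_le (.cons huw (.cons hvw.symm .nil))
    simp only [Walk.length_cons, Walk.length_nil] at h2
    omega
  have hdisj : Disjoint (G.neighborSet u ∪ G.neighborSet v) (G.neighborSet w) := by
    rw [Set.disjoint_left]
    rintro x (hx | hx) hxw
    · exact c.valid huw (c.eq_of_adj_of_adj hx hxw.symm)
    · exact c.valid hvw (c.eq_of_adj_of_adj hx hxw.symm)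
  have hL := hL1 u v w hdist huw hvw
  rw [Set.ncard_union_eq hdisj ((hlf u).union (hlf v)) (hlf w)] at hL
  have hI := Set.ncard_union_add_ncard_inter _ _ (hlf u) (hlf v)
  have hw0 : 0 < (G.neighborSet w).ncard := (Set.ncard_pos (hlf w)).mpr ⟨u, huw.symm⟩
  rw [commonNeighbors_eq]
  omega

structure IsGeodesic4 (G : SimpleGraph V) (p₀ p₁ p₂ p₃ p₄ : V) : Prop where
  adj₀₁ : G.Adj p₀ p₁
  adj₁₂ : G.Adj p₁ p₂
  adj₂₃ : G.Adj p₂ p₃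
  adj₃₄ : G.Adj p₃ p₄
  dist_eq : G.dist p₀ p₄ = 4

theorem exists_isGeodesic4_of_four_le_dist {u v : V} (h : 4 ≤ G.dist u v) :
    ∃ p₁ p₂ p₃ p₄, G.IsGeodesic4 u p₁ p₂ p₃ p₄ := by
  obtain ⟨p, hp⟩ := exists_walk_of_dist_ne_zero (show G.dist u v ≠ 0 by omega)
  have hadj (i : ℕ) (hi : i < 4) := p.adj_getVert_succ (i := i) (by omega)
  have h₀ := hadj 0 (by omega)
  rw [p.getVert_zero] at h₀
  refine ⟨p.getVert 1, p.getVert 2, p.getVert 3, p.getVert 4,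
    h₀, hadj 1 (by omega), hadj 2 (by omega), hadj 3 (by omega), ?_⟩
  rw [← length_eq_dist_of_subwalk hp (p.isSubwalk_take 4), Walk.take_length]
  omega

namespace IsGeodesic4

variable {p₀ p₁ p₂ p₃ p₄ : V}

theorem symm (h : G.IsGeodesic4 p₀ p₁ p₂ p₃ p₄) : G.IsGeodesic4 p₄ p₃ p₂ p₁ p₀ :=
  ⟨h.adj₃₄.symm, h.adj₂₃.symm, h.adj₁₂.symm, h.adj₀₁.symm, dist_comm.trans h.dist_eq⟩

theorem not_adj_of_adj (h : G.IsGeodesic4 p₀ p₁ p₂ p₃ p₄) {x : V} (hx : G.Adj p₀ x) :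
    ¬G.Adj x p₄ := fun hx₄ => by
  have := dist_le (.cons hx (.cons hx₄ .nil))
  simp [h.dist_eq] at this

theorem ne₀₂ (h : G.IsGeodesic4 p₀ p₁ p₂ p₃ p₄) : p₀ ≠ p₂ := by
  rintro rfl
  exact h.not_adj_of_adj h.adj₂₃ h.adj₃₄

theorem ne₁₃ (h : G.IsGeodesic4 p₀ p₁ p₂ p₃ p₄) : p₁ ≠ p₃ := by
  rintro rfl
  exact h.not_adj_of_adj h.adj₀₁ h.adj₃₄

variable (hL1 : IsL1Graph G) (hlf : ∀ x, (G.neighborSet x).Finite) (c : G.Coloring Bool)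
include hL1 hlf c

/-- The `L₁` inequality at `p₁`, `p₃` and `p₂` gives
`deg p₁ + deg p₃ ≤ deg p₂ + 2 ≤ |N(p₁) ∩ N(p₃)| + 3`, and `N(p₁) ∩ N(p₃)` misses both
`p₀ ∈ N(p₁)` and `p₄ ∈ N(p₃)`. -/
theorem ncard_neighborSet_le_two (h : G.IsGeodesic4 p₀ p₁ p₂ p₃ p₄) :
    (G.neighborSet p₁).ncard ≤ 2 ∧ (G.neighborSet p₂).ncard ≤ 2 ∧
      (G.neighborSet p₃).ncard ≤ 2 := by
  have k₁ := hL1.ncard_neighborSet_le_commonNeighbors hlf c h.ne₀₂.symm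
    (c.eq_of_adj_of_adj h.adj₀₁ h.adj₁₂).symm (G.mem_commonNeighbors.mpr ⟨h.adj₁₂.symm, h.adj₀₁⟩)
  have k₃ := hL1.ncard_neighborSet_le_commonNeighbors hlf c h.symm.ne₀₂.symm
    (c.eq_of_adj_of_adj h.adj₂₃ h.adj₃₄) (G.mem_commonNeighbors.mpr ⟨h.adj₂₃, h.adj₃₄.symm⟩)
  have k₂ := hL1.ncard_neighborSet_le_commonNeighbors hlf c h.ne₁₃
    (c.eq_of_adj_of_adj h.adj₁₂ h.adj₂₃) (G.mem_commonNeighbors.mpr ⟨h.adj₁₂, h.adj₂₃.symm⟩)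
  have hsplit : (G.commonNeighbors p₂ p₀).ncard + (G.commonNeighbors p₂ p₄).ncard ≤
      (G.neighborSet p₂).ncard := by
    have hdisj : Disjoint (G.commonNeighbors p₂ p₀) (G.commonNeighbors p₂ p₄) :=
      Set.disjoint_left.mpr fun x hx₀ hx₄ => h.not_adj_of_adj
        (G.mem_commonNeighbors.mp hx₀).2 (G.mem_commonNeighbors.mp hx₄).2.symm
    rw [← Set.ncard_union_eq hdisj ((hlf p₂).subset (commonNeighbors_subset_neighborSet_left ..))
      ((hlf p₂).subset (commonNeighbors_subset_neighborSet_left ..))]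
    exact Set.ncard_le_ncard (Set.union_subset (commonNeighbors_subset_neighborSet_left ..)
      (commonNeighbors_subset_neighborSet_left ..)) (hlf p₂)
  have hT₁ : (G.commonNeighbors p₁ p₃).ncard < (G.neighborSet p₁).ncard :=
    Set.ncard_lt_ncard ((Set.ssubset_iff_of_subset (commonNeighbors_subset_neighborSet_left ..)).2
      ⟨p₀, h.adj₀₁.symm, fun hx => h.not_adj_of_adj (G.mem_commonNeighbors.mp hx).2.symm h.adj₃₄⟩)
      (hlf p₁)
  have hT₃ : (G.commonNeighbors p₁ p₃).ncard < (G.neighborSet p₃).ncard :=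
    Set.ncard_lt_ncard ((Set.ssubset_iff_of_subset (commonNeighbors_subset_neighborSet_right ..)).2
      ⟨p₄, h.adj₃₄, fun hx => h.not_adj_of_adj h.adj₀₁ (G.mem_commonNeighbors.mp hx).1⟩)
      (hlf p₃)
  omega

theorem neighborSet_one (h : G.IsGeodesic4 p₀ p₁ p₂ p₃ p₄) : G.neighborSet p₁ = {p₀, p₂} :=
  (Set.eq_of_subset_of_ncard_le (Set.pair_subset h.adj₀₁.symm h.adj₁₂)
    (by rw [Set.ncard_pair h.ne₀₂]; exact (h.ncard_neighborSet_le_two hL1 hlf c).1)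
    (hlf p₁)).symm

theorem neighborSet_two (h : G.IsGeodesic4 p₀ p₁ p₂ p₃ p₄) : G.neighborSet p₂ = {p₁, p₃} :=
  (Set.eq_of_subset_of_ncard_le (Set.pair_subset h.adj₁₂.symm h.adj₂₃)
    (by rw [Set.ncard_pair h.ne₁₃]; exact (h.ncard_neighborSet_le_two hL1 hlf c).2.1)
    (hlf p₂)).symm

theorem extend (h : G.IsGeodesic4 p₀ p₁ p₂ p₃ p₄) {y : V} (hy : G.Adj y p₀) (hne : y ≠ p₁) :
    G.IsGeodesic4 y p₀ p₁ p₂ p₃ := by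
  refine ⟨hy, h.adj₀₁, h.adj₁₂, h.adj₂₃, ?_⟩
  have hle := dist_le (.cons hy (.cons h.adj₀₁ (.cons h.adj₁₂ (.cons h.adj₂₃ .nil))))
  simp only [Walk.length_cons, Walk.length_nil] at hle
  have hy₃ : y ≠ p₃ := fun e => h.not_adj_of_adj (e ▸ hy.symm) h.adj₃₄
  have hr : G.Reachable y p₃ := (hy.reachable.trans h.adj₀₁.reachable).trans
    (h.adj₁₂.reachable.trans h.adj₂₃.reachable)
  have hpos := hr.pos_dist_of_ne hy₃
  have heven : Even (G.dist y p₃) := (c.even_dist_iff hr).mpr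
    ((c.eq_of_adj_of_adj hy h.adj₀₁).trans (c.eq_of_adj_of_adj h.adj₁₂ h.adj₂₃))
  have hne2 : G.dist y p₃ ≠ 2 := fun h2 => by
    obtain ⟨w, hyw, hw₃⟩ := exists_adj_adj_of_dist_eq_two h2
    have hw : w ∈ G.neighborSet p₃ := hw₃.symm
    rw [h.symm.neighborSet_one hL1 hlf c] at hw
    rcases hw with rfl | rfl
    · exact h.not_adj_of_adj hy.symm hyw
    · have hy' : y ∈ G.neighborSet w := hyw.symm
      rw [h.neighborSet_two hL1 hlf c] at hy'
      rcases hy' with rfl | rfl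
      · exact hne rfl
      · exact hy₃ rfl
  obtain ⟨k, hk⟩ := heven
  omega

theorem exists_isGeodesic4_of_adj (h : G.IsGeodesic4 p₀ p₁ p₂ p₃ p₄) {x y : V}
    (hx : x = p₀ ∨ x = p₁ ∨ x = p₂) (hxy : G.Adj x y) :
    ∃ q₀ q₁ q₂ q₃ q₄, G.IsGeodesic4 q₀ q₁ q₂ q₃ q₄ ∧ (y = q₀ ∨ y = q₁ ∨ y = q₂) := by
  rcases hx with rfl | rfl | rfl
  · by_cases hy : y = p₁
    · exact ⟨_, _, _, _, _, h, .inr (.inl hy)⟩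
    · exact ⟨_, _, _, _, _, h.extend hL1 hlf c hxy.symm hy, .inl rfl⟩
  · have hy : y ∈ G.neighborSet x := hxy
    rw [h.neighborSet_one hL1 hlf c] at hy
    rcases hy with rfl | rfl
    · exact ⟨_, _, _, _, _, h, .inl rfl⟩
    · exact ⟨_, _, _, _, _, h, .inr (.inr rfl)⟩
  · have hy : y ∈ G.neighborSet x := hxy
    rw [h.neighborSet_two hL1 hlf c] at hy
    rcases hy with rfl | rfl
    · exact ⟨_, _, _, _, _, h, .inr (.inl rfl)⟩
    · exact ⟨_, _, _, _, _, h.symm, .inr (.inl rfl)⟩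

end IsGeodesic4

section

variable (hL1 : IsL1Graph G) (hlf : ∀ x, (G.neighborSet x).Finite) (c : G.Coloring Bool)
include hL1 hlf c

/-- The vertices lying on geodesic 4-paths are closed under adjacency, and none of them has
degree `3` or more. -/
theorem not_isGeodesic4 (hconn : G.Connected) {z : V} (hz : 3 ≤ (G.neighborSet z).ncard)
    {p₀ p₁ p₂ p₃ p₄ : V} : ¬G.IsGeodesic4 p₀ p₁ p₂ p₃ p₄ := by
  intro h
  have hwalk : ∀ {x y : V} (_ : G.Walk x y),
      (∃ q₀ q₁ q₂ q₃ q₄, G.IsGeodesic4 q₀ q₁ q₂ q₃ q₄ ∧ (x = q₀ ∨ x = q₁ ∨ x = q₂)) →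
      ∃ q₀ q₁ q₂ q₃ q₄, G.IsGeodesic4 q₀ q₁ q₂ q₃ q₄ ∧ (y = q₀ ∨ y = q₁ ∨ y = q₂) := by
    intro x y p
    induction p with
    | nil => exact id
    | cons hxy _ ih =>
      rintro ⟨q₀, q₁, q₂, q₃, q₄, hq, hx⟩
      exact ih (hq.exists_isGeodesic4_of_adj hL1 hlf c hx hxy)
  obtain ⟨p⟩ := hconn.preconnected p₀ z
  obtain ⟨q₀, q₁, q₂, q₃, q₄, hq, hzq⟩ := hwalk p ⟨_, _, _, _, _, h, .inl rfl⟩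
  have hdeg := hq.ncard_neighborSet_le_two hL1 hlf c
  rcases hzq with rfl | rfl | rfl
  · obtain ⟨y, hy, hyq⟩ := Set.exists_ne_of_one_lt_ncard (s := G.neighborSet z) (by omega) q₁
    have := ((hq.extend hL1 hlf c (G.adj_symm hy) hyq).ncard_neighborSet_le_two hL1 hlf c).1
    omega
  · omega
  · omega

theorem commonNeighbors_nonempty (hconn : G.Connected) {z : V}
    (hz : 3 ≤ (G.neighborSet z).ncard) {u v : V} (huv : c u = c v) (hne : u ≠ v) :
    (G.commonNeighbors u v).Nonempty := by
  have hpos := hconn.pos_dist_of_ne hne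
  have heven := (c.even_dist_iff (hconn u v)).mpr huv
  have hlt : G.dist u v < 4 := by
    by_contra! h4
    obtain ⟨p₁, p₂, p₃, p₄, h⟩ := exists_isGeodesic4_of_four_le_dist h4
    exact not_isGeodesic4 hL1 hlf c hconn hz h
  have h2 : G.dist u v = 2 := by
    obtain ⟨k, hk⟩ := heven
    omega
  obtain ⟨w, huw, hwv⟩ := exists_adj_adj_of_dist_eq_two h2
  exact ⟨w, G.mem_commonNeighbors.mpr ⟨huw, hwv.symm⟩⟩

end

theorem finite_of_forall_commonNeighbors_nonempty (hlf : ∀ x, (G.neighborSet x).Finite)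
    (c : G.Coloring Bool)
    (hcommon : ∀ ⦃u v⦄, c u = c v → u ≠ v → (G.commonNeighbors u v).Nonempty) {z w : V}
    (hzw : G.Adj z w) : Finite V := by
  have hcover : ∀ {a b x : V}, G.Adj a b → c x = c a →
      ∃ y ∈ G.neighborSet a ∪ G.neighborSet b, x ∈ G.neighborSet y := by
    intro a b x hab hx
    by_cases hxa : x = a
    · exact ⟨b, .inl hab, hxa ▸ hab.symm⟩
    · obtain ⟨y, hy⟩ := hcommon hx hxa
      exact ⟨y, .inl (G.mem_commonNeighbors.mp hy).2, (G.mem_commonNeighbors.mp hy).1.symm⟩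
  refine Set.finite_univ_iff.mp ((((hlf z).union (hlf w)).biUnion fun y _ => hlf y).subset ?_)
  intro x _
  by_cases hx : c x = c z
  · obtain ⟨y, hy, hxy⟩ := hcover hzw hx
    exact Set.mem_biUnion hy hxy
  · obtain ⟨y, hy, hxy⟩ := hcover hzw.symm (c.eq_of_ne_of_adj hx hzw)
    exact Set.mem_biUnion (Set.union_comm _ _ ▸ hy) hxy

namespace Coloring

variable (c : G.Coloring Bool)

def missingNeighbors (x : V) : Set V :=
  c.colorClass (!c x) \ G.neighborSet x

theorem neighborSet_subset_colorClass (x : V) : G.neighborSet x ⊆ c.colorClass (!c x) :=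
  fun _ hy => Bool.eq_not.mpr (c.valid hy).symm

theorem neighborSet_eq_sdiff_missingNeighbors (x : V) :
    G.neighborSet x = c.colorClass (!c x) \ c.missingNeighbors x :=
  (Set.sdiff_sdiff_cancel_left (c.neighborSet_subset_colorClass x)).symm

theorem mem_missingNeighbors_comm {x y : V} :
    y ∈ c.missingNeighbors x ↔ x ∈ c.missingNeighbors y := by
  simp only [missingNeighbors, Set.mem_sdiff, mem_colorClass_iff, mem_neighborSet, adj_comm,
    Bool.eq_not, ne_comm]

theorem adj_iff_notMem_missingNeighbors {x y : V} (hy : c y = !c x) :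
    G.Adj x y ↔ y ∉ c.missingNeighbors x := by
  simp [missingNeighbors, hy]

theorem nonempty_iso_of_equiv {α β : Type*} {H : SimpleGraph (α ⊕ β)} (b : Bool)
    (eA : c.colorClass b ≃ α) (eB : c.colorClass (!b) ≃ β)
    (hl : ∀ a a', ¬H.Adj (.inl a) (.inl a')) (hr : ∀ a a', ¬H.Adj (.inr a) (.inr a'))
    (hcross : ∀ x y, H.Adj (.inl (eA x)) (.inr (eB y)) ↔ G.Adj x y) :
    Nonempty (G ≃g H) := by
  classical
  have hcompl : c.colorClass (!b) = (c.colorClass b)ᶜ := by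
    ext x
    simp [Bool.eq_not]
  let e : α ⊕ β ≃ V := (eA.symm.sumCongr (eB.symm.trans (Equiv.setCongr hcompl))).trans
    (Equiv.Set.sumCompl _)
  refine ⟨(⟨e, ?_⟩ : H ≃g G).symm⟩
  rintro (a | a) (a' | a')
  · exact iff_of_false (c.not_adj_of_mem_colorClass (eA.symm a).2 (eA.symm a').2) (hl a a')
  · simpa [e] using (hcross (eA.symm a) (eB.symm a')).symm
  · simpa [e, adj_comm] using (hcross (eA.symm a') (eB.symm a)).symm
  · exact iff_of_false (c.not_adj_of_mem_colorClass (eB.symm a).2 (eB.symm a').2) (hr a a')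

variable [Finite V]

theorem ncard_neighborSet_add_ncard_missingNeighbors (x : V) :
    (G.neighborSet x).ncard + (c.missingNeighbors x).ncard = (c.colorClass (!c x)).ncard := by
  rw [add_comm]
  exact Set.ncard_sdiff_add_ncard_of_subset (c.neighborSet_subset_colorClass x)

theorem nonempty_iso_completeBipartiteGraph (h0 : ∀ x, c.missingNeighbors x = ∅) {b : Bool}
    {n m : ℕ} (hn : (c.colorClass b).ncard = n) (hm : (c.colorClass (!b)).ncard = m) :
    Nonempty (G ≃g completeBipartiteGraph (Fin n) (Fin m)) :=
  c.nonempty_iso_of_equiv b ((Finite.equivFin _).trans (finCongr hn))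
    ((Finite.equivFin _).trans (finCongr hm)) (by simp) (by simp) fun x y => by
      rw [c.adj_iff_notMem_missingNeighbors (y.2.trans (congrArg (!·) x.2.symm)), h0]
      simp

theorem nonempty_iso_knnMinusEdge {x₀ y₀ : V} (hx₀ : c.missingNeighbors x₀ = {y₀})
    (h1 : ∀ x, x ≠ x₀ → x ≠ y₀ → c.missingNeighbors x = ∅) {n : ℕ}
    (hn : (c.colorClass (c x₀)).ncard = n + 1) (hm : (c.colorClass (!c x₀)).ncard = n + 1) :
    Nonempty (G ≃g KnnMinusEdge n) := by
  have hy₀ : y₀ ∈ c.colorClass (!c x₀) := ((Set.ext_iff.mp hx₀ y₀).mpr rfl).1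
  obtain ⟨eA, heA⟩ := Set.exists_equiv_fin_apply_eq_zero hn ⟨x₀, rfl⟩
  obtain ⟨eB, heB⟩ := Set.exists_equiv_fin_apply_eq_zero hm ⟨y₀, hy₀⟩
  refine c.nonempty_iso_of_equiv (c x₀) eA eB (by simp [KnnMinusEdge]) (by simp [KnnMinusEdge])
    fun x y => ?_
  rw [c.adj_iff_notMem_missingNeighbors (y.2.trans (congrArg (!·) x.2.symm))]
  have hA0 : eA x = 0 ↔ (x : V) = x₀ := by rw [← heA, eA.apply_eq_iff_eq, Subtype.ext_iff]
  have hB0 : eB y = 0 ↔ (y : V) = y₀ := by rw [← heB, eB.apply_eq_iff_eq, Subtype.ext_iff]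
  have hmiss : (y : V) ∈ c.missingNeighbors x ↔ (x : V) = x₀ ∧ (y : V) = y₀ := by
    by_cases hx : (x : V) = x₀
    · simp [hx, hx₀]
    · have hxy₀ : (x : V) ≠ y₀ := fun e => by
        have h := x.2
        rw [mem_colorClass_iff, e, hy₀] at h
        simp at h
      simp [h1 x hx hxy₀, hx]
  simp [KnnMinusEdge, hmiss, hA0, hB0]

theorem nonempty_iso_knnMinusMatching {f : V → V} (hf : ∀ x, c.missingNeighbors x = {f x})
    (b : Bool) : Nonempty (G ≃g KnnMinusMatching (c.colorClass b).ncard) := by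
  have hmem : ∀ {x y}, y ∈ c.missingNeighbors x ↔ y = f x := by
    intro x y
    rw [hf x, Set.mem_singleton_iff]
  have hinv : Function.Involutive f := fun x =>
    (hmem.mp (c.mem_missingNeighbors_comm.mp (hmem.mpr rfl))).symm
  have hcol : ∀ x, c (f x) = !c x := fun x => (hmem.mpr rfl : f x ∈ _).1
  let partner : c.colorClass (!b) ≃ c.colorClass b :=
    { toFun := fun y => ⟨f y, by simp [hcol, y.2.out]⟩
      invFun := fun x => ⟨f x, by simp [hcol, x.2.out]⟩
      left_inv := fun y => Subtype.ext (hinv y)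
      right_inv := fun x => Subtype.ext (hinv x) }
  let eA : c.colorClass b ≃ Fin (c.colorClass b).ncard := Finite.equivFin _
  refine c.nonempty_iso_of_equiv b eA (partner.trans eA) (fun _ _ h => h) (fun _ _ h => h)
    fun x y => ?_
  rw [c.adj_iff_notMem_missingNeighbors (y.2.trans (congrArg (!·) x.2.symm)), hmem]
  change eA x ≠ eA (partner y) ↔ _
  rw [ne_eq, eA.apply_eq_iff_eq, Subtype.ext_iff]
  exact not_congr (hinv.eq_iff.symm.trans eq_comm)

variable (hL1 : IsL1Graph G)
  (hcommon : ∀ ⦃u v⦄, c u = c v → u ≠ v → (G.commonNeighbors u v).Nonempty)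
include hL1 hcommon

/-- Comparing `x` with a common neighbour `w` of two of its missing neighbours `a₁ ≠ a₂`,
and `w` with a common neighbour `a₀` of `w` and `x`, the `L₁` inequality forces
`N(a₀) ⊆ N(a₁)`, although `x ∈ N(a₀) \ N(a₁)`. -/
theorem subsingleton_missingNeighbors (x : V) : (c.missingNeighbors x).Subsingleton := by
  intro a₁ ha₁ a₂ ha₂
  by_contra hne
  have hlf : ∀ v, (G.neighborSet v).Finite := fun _ => Set.toFinite _
  have hxa₁ : ¬G.Adj x a₁ := ha₁.2
  obtain ⟨w, hw⟩ := hcommon (ha₁.1.trans ha₂.1.symm) hne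
  obtain ⟨ha₁w, ha₂w⟩ := G.mem_commonNeighbors.mp hw
  have hwx : c w = c x := (c.eq_of_ne_of_adj (Bool.eq_not.mp ha₁.1).symm ha₁w).symm
  have hwx' : w ≠ x := by
    rintro rfl
    exact hxa₁ ha₁w.symm
  obtain ⟨a₀, ha₀⟩ := hcommon hwx hwx'
  obtain ⟨hwa₀, hxa₀⟩ := G.mem_commonNeighbors.mp ha₀
  have ha₁₀ : a₁ ≠ a₀ := by
    rintro rfl
    exact hxa₁ hxa₀
  have k₁ := hL1.ncard_neighborSet_le_commonNeighbors hlf c ha₁₀ (c.eq_of_adj_of_adj ha₁w hwa₀)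
    (G.mem_commonNeighbors.mpr ⟨ha₁w, hwa₀.symm⟩)
  have k₂ := hL1.ncard_neighborSet_le_commonNeighbors hlf c hwx' hwx ha₀
  have hS : (G.commonNeighbors w x).ncard + 2 ≤ (G.neighborSet w).ncard := by
    have hdisj : Disjoint (G.commonNeighbors w x) {a₁, a₂} := by
      rw [Set.disjoint_left]
      rintro y hy (rfl | rfl)
      exacts [ha₁.2 (G.mem_commonNeighbors.mp hy).2, ha₂.2 (G.mem_commonNeighbors.mp hy).2]
    rw [← Set.ncard_pair hne, ← Set.ncard_union_eq hdisj]
    exact Set.ncard_le_ncard (Set.union_subset (commonNeighbors_subset_neighborSet_left ..)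
      (Set.pair_subset ha₁w.symm ha₂w.symm))
  have hsub : G.commonNeighbors a₁ a₀ ⊆ G.neighborSet a₀ :=
    commonNeighbors_subset_neighborSet_right ..
  have heq := Set.eq_of_subset_of_ncard_le hsub (by omega)
  have hx : x ∈ G.commonNeighbors a₁ a₀ := heq ▸ hxa₀.symm
  exact hxa₁ (G.mem_commonNeighbors.mp hx).1.symm

theorem disjoint_missingNeighbors {u v : V} (hne : u ≠ v) :
    Disjoint (c.missingNeighbors u) (c.missingNeighbors v) :=
  Set.disjoint_left.mpr fun y hu hv => hne <| c.subsingleton_missingNeighbors hL1 hcommon y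
    (c.mem_missingNeighbors_comm.1 hu) (c.mem_missingNeighbors_comm.1 hv)

theorem ncard_missingNeighbors_le_one (x : V) : (c.missingNeighbors x).ncard ≤ 1 :=
  Set.ncard_le_one_iff_subsingleton.mpr (c.subsingleton_missingNeighbors hL1 hcommon x)

/-- The `L₁` inequality `deg w ≤ |N(u) ∩ N(v)| + 1` rewritten through
`deg w = |class(u)| - |missing(w)|` and
`|N(u) ∩ N(v)| = |class(w)| - |missing(u)| - |missing(v)|`. -/
theorem ncard_colorClass_add_le {u v w : V} (hne : u ≠ v) (huv : c u = c v)
    (hw : w ∈ G.commonNeighbors u v) :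
    (c.colorClass (c u)).ncard + (c.missingNeighbors u).ncard + (c.missingNeighbors v).ncard ≤
      (c.colorClass (c w)).ncard + (c.missingNeighbors w).ncard + 1 := by
  have k := hL1.ncard_neighborSet_le_commonNeighbors (fun _ => Set.toFinite _) c hne huv hw
  have hwu : c w = !c u := Bool.eq_not.mpr (c.valid (G.mem_commonNeighbors.mp hw).1).symm
  rw [commonNeighbors_eq, c.neighborSet_eq_sdiff_missingNeighbors u,
    c.neighborSet_eq_sdiff_missingNeighbors v, ← huv, Set.sdiff_inter_sdiff, ← hwu] at k
  have hXu : c.missingNeighbors u ⊆ c.colorClass (c w) := by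
    rw [hwu]
    exact Set.sdiff_subset
  have hXv : c.missingNeighbors v ⊆ c.colorClass (c w) := by
    rw [hwu, huv]
    exact Set.sdiff_subset
  have hsplit := Set.ncard_sdiff_add_ncard_of_subset (Set.union_subset hXu hXv)
  rw [Set.ncard_union_eq (c.disjoint_missingNeighbors hL1 hcommon hne)] at hsplit
  have hdeg := c.ncard_neighborSet_add_ncard_missingNeighbors w
  rw [hwu, Bool.not_not] at hdeg
  omega

theorem ncard_colorClass_add_one_le {p q w : V} (hpq : p ≠ q) (hc : c p = c q)
    (hp : (c.missingNeighbors p).Nonempty) (hq : (c.missingNeighbors q).Nonempty)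
    (hw : w ∈ G.commonNeighbors p q) :
    (c.colorClass (c p)).ncard + 1 ≤
      (c.colorClass (!c p)).ncard + (c.missingNeighbors w).ncard := by
  have := c.ncard_colorClass_add_le hL1 hcommon hpq hc hw
  rw [← Bool.eq_not.mpr (c.valid (G.mem_commonNeighbors.mp hw).1).symm]
  have := hp.ncard_pos
  have := hq.ncard_pos
  omega

theorem ncard_colorClass_le_succ (h0 : ∀ x, c.missingNeighbors x = ∅) (b : Bool) :
    (c.colorClass b).ncard ≤ (c.colorClass (!b)).ncard + 1 := by
  by_contra! hlt
  obtain ⟨u, v, hu, hv, hne⟩ := (Set.one_lt_ncard_iff).mp (by omega : 1 < (c.colorClass b).ncard)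
  rw [mem_colorClass_iff] at hu hv
  obtain ⟨w, hw⟩ := hcommon (hu.trans hv.symm) hne
  have hwb : c w = !b := hu ▸ Bool.eq_not.mpr (c.valid (G.mem_commonNeighbors.mp hw).1).symm
  have := c.ncard_colorClass_add_le hL1 hcommon hne (hu.trans hv.symm) hw
  simp only [h0, Set.ncard_empty, hu, hwb] at this
  omega

theorem ncard_colorClass_le_of_forall_missingNeighbors_eq_empty (hconn : G.Connected)
    {x₀ y₀ : V} (hy₀ : y₀ ∈ c.missingNeighbors x₀)
    (h1 : ∀ x, x ≠ x₀ → x ≠ y₀ → c.missingNeighbors x = ∅) :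
    (c.colorClass (c x₀)).ncard ≤ (c.colorClass (c y₀)).ncard := by
  have hcy₀ : c y₀ = !c x₀ := hy₀.1
  have hxy : c x₀ ≠ c y₀ := by simp [hcy₀]
  have : Nontrivial V := ⟨x₀, y₀, fun e => hxy (congrArg c e)⟩
  obtain ⟨v, hv⟩ := hconn.preconnected.exists_adj_of_nontrivial y₀
  have hvx : v ≠ x₀ := by
    rintro rfl
    exact hy₀.2 hv.symm
  obtain ⟨w, hw⟩ := hcommon (c.eq_of_ne_of_adj hxy hv) hvx.symm
  obtain ⟨hx₀w, hvw⟩ := G.mem_commonNeighbors.mp hw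
  have hw0 : c.missingNeighbors w = ∅ :=
    h1 w (fun e => hx₀w.ne e.symm) (fun e => hy₀.2 (e ▸ hx₀w))
  have hwy : c w = c y₀ := (Bool.eq_not.mpr (c.valid hx₀w).symm).trans hcy₀.symm
  have := c.ncard_colorClass_add_le hL1 hcommon hvx.symm (c.eq_of_ne_of_adj hxy hv) hw
  have hpos : 0 < (c.missingNeighbors x₀).ncard := (Set.ncard_pos).mpr ⟨y₀, hy₀⟩
  rw [hw0, Set.ncard_empty, hwy] at this
  omega

/-- The partners `a₁ ≠ a₂` of `b₁` and `b₂` also miss a vertex, so comparing each pair with a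
common neighbour makes the two colour classes equally large; a vertex missing nothing is adjacent
to both vertices of the pair of the other colour, which makes the class of that pair strictly
smaller. -/
theorem missingNeighbors_nonempty {b₁ b₂ : V} (hb : b₁ ≠ b₂) (hcb : c b₁ = c b₂)
    (h₁ : (c.missingNeighbors b₁).Nonempty) (h₂ : (c.missingNeighbors b₂).Nonempty) (u : V) :
    (c.missingNeighbors u).Nonempty := by
  obtain ⟨a₁, ha₁⟩ := h₁
  obtain ⟨a₂, ha₂⟩ := h₂
  have hb₁ : (c.missingNeighbors a₁).Nonempty := ⟨b₁, c.mem_missingNeighbors_comm.1 ha₁⟩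
  have hb₂ : (c.missingNeighbors a₂).Nonempty := ⟨b₂, c.mem_missingNeighbors_comm.1 ha₂⟩
  have ha : a₁ ≠ a₂ := by
    rintro rfl
    exact hb (c.subsingleton_missingNeighbors hL1 hcommon a₁
      (c.mem_missingNeighbors_comm.1 ha₁) (c.mem_missingNeighbors_comm.1 ha₂))
  have hca₁ : c a₁ = !c b₁ := ha₁.1
  have hca : c a₁ = c a₂ := hca₁.trans (hcb ▸ ha₂.1.symm)
  obtain ⟨w, hw⟩ := hcommon hcb hb
  obtain ⟨w', hw'⟩ := hcommon hca ha
  have kb := c.ncard_colorClass_add_one_le hL1 hcommon hb hcb ⟨a₁, ha₁⟩ ⟨a₂, ha₂⟩ hw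
  have ka := c.ncard_colorClass_add_one_le hL1 hcommon ha hca hb₁ hb₂ hw'
  have := c.ncard_missingNeighbors_le_one hL1 hcommon w
  have := c.ncard_missingNeighbors_le_one hL1 hcommon w'
  rw [hca₁, Bool.not_not] at ka
  by_contra hu
  rw [Set.not_nonempty_iff_eq_empty] at hu
  have hadj : ∀ {y}, c y = !c u → G.Adj y u := fun hy =>
    ((c.adj_iff_notMem_missingNeighbors hy).mpr (hu ▸ Set.notMem_empty _)).symm
  rcases Bool.eq_or_eq_not (c u) (c b₁) with hub | hub
  · have := c.ncard_colorClass_add_one_le hL1 hcommon ha hca hb₁ hb₂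
      (G.mem_commonNeighbors.mpr ⟨hadj (by rw [hub, ← hca₁]), hadj (by rw [hub, ← hca₁, hca])⟩)
    rw [hu, Set.ncard_empty, hca₁, Bool.not_not] at this
    omega
  · have := c.ncard_colorClass_add_one_le hL1 hcommon hb hcb ⟨a₁, ha₁⟩ ⟨a₂, ha₂⟩
      (G.mem_commonNeighbors.mpr ⟨hadj (by rw [hub, Bool.not_not]),
        hadj (by rw [hub, Bool.not_not, hcb])⟩)
    rw [hu, Set.ncard_empty] at this
    omega

theorem exists_iso_completeBipartiteGraph (h0 : ∀ x, c.missingNeighbors x = ∅) :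
    (∃ n, Nonempty (G ≃g completeBipartiteGraph (Fin n) (Fin n))) ∨
      ∃ n, Nonempty (G ≃g completeBipartiteGraph (Fin n) (Fin (n + 1))) := by
  have h₁ := c.ncard_colorClass_le_succ hL1 hcommon h0 false
  have h₂ := c.ncard_colorClass_le_succ hL1 hcommon h0 true
  simp only [Bool.not_false, Bool.not_true] at h₁ h₂
  obtain h | h | h : (c.colorClass false).ncard = (c.colorClass true).ncard ∨
      (c.colorClass true).ncard = (c.colorClass false).ncard + 1 ∨
      (c.colorClass false).ncard = (c.colorClass true).ncard + 1 := by omega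
  · exact .inl ⟨_, c.nonempty_iso_completeBipartiteGraph h0 (b := false) rfl h.symm⟩
  · exact .inr ⟨_, c.nonempty_iso_completeBipartiteGraph h0 (b := false) rfl h⟩
  · exact .inr ⟨_, c.nonempty_iso_completeBipartiteGraph h0 (b := true) rfl h⟩

theorem exists_iso_knnMinusEdge (hconn : G.Connected) {x₀ y₀ : V}
    (hy₀ : y₀ ∈ c.missingNeighbors x₀)
    (h1 : ∀ x, x ≠ x₀ → x ≠ y₀ → c.missingNeighbors x = ∅) :
    ∃ n, Nonempty (G ≃g KnnMinusEdge n) := by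
  have hle :=
    c.ncard_colorClass_le_of_forall_missingNeighbors_eq_empty hL1 hcommon hconn hy₀ h1
  have hge := c.ncard_colorClass_le_of_forall_missingNeighbors_eq_empty hL1 hcommon hconn
    (c.mem_missingNeighbors_comm.mp hy₀) fun x hy hx => h1 x hx hy
  have hcy₀ : c y₀ = !c x₀ := hy₀.1
  obtain ⟨n, hn⟩ := Nat.exists_eq_add_one_of_ne_zero
    ((Set.ncard_pos (s := c.colorClass (c x₀))).mpr ⟨x₀, rfl⟩).ne'
  exact ⟨n, c.nonempty_iso_knnMinusEdge
    ((c.subsingleton_missingNeighbors hL1 hcommon x₀).eq_singleton_of_mem hy₀) h1 hn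
    (by rw [← hcy₀]; omega)⟩

theorem exists_iso_knnMinusMatching {x₀ y₀ x₁ : V} (hy₀ : y₀ ∈ c.missingNeighbors x₀)
    (hx₁ : (c.missingNeighbors x₁).Nonempty) (h₁₀ : x₁ ≠ x₀) (h₁y : x₁ ≠ y₀) :
    ∃ n, Nonempty (G ≃g KnnMinusMatching n) := by
  have hall : ∀ u, (c.missingNeighbors u).Nonempty := by
    rcases Bool.eq_or_eq_not (c x₁) (c x₀) with h | h
    · exact c.missingNeighbors_nonempty hL1 hcommon h₁₀ h hx₁ ⟨y₀, hy₀⟩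
    · exact c.missingNeighbors_nonempty hL1 hcommon h₁y (h.trans hy₀.1.symm) hx₁
        ⟨x₀, c.mem_missingNeighbors_comm.mp hy₀⟩
  choose f hf using hall
  exact ⟨_, c.nonempty_iso_knnMinusMatching
    (fun x => (c.subsingleton_missingNeighbors hL1 hcommon x).eq_singleton_of_mem (hf x)) false⟩

end Coloring

end SimpleGraph

theorem stmt19 {V : Type*} (G : SimpleGraph V)
    (hlf : ∀ x : V, (G.neighborSet x).Finite)
    (hconn : G.Connected) (hbip : G.Colorable 2) (hL1 : IsL1Graph G)
    (hdeg : ∃ x : V, 3 ≤ (G.neighborSet x).ncard) :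
    (∃ n : ℕ, Nonempty (G ≃g completeBipartiteGraph (Fin n) (Fin n))) ∨
    (∃ n : ℕ, Nonempty (G ≃g completeBipartiteGraph (Fin n) (Fin (n + 1)))) ∨
    (∃ n : ℕ, Nonempty (G ≃g KnnMinusEdge n)) ∨
    (∃ n : ℕ, Nonempty (G ≃g KnnMinusMatching n)) := by
  obtain ⟨c₂⟩ := hbip
  let c : G.Coloring Bool := G.recolorOfEquiv finTwoEquiv c₂
  obtain ⟨z, hz⟩ := hdeg
  have hcommon : ∀ ⦃u v⦄, c u = c v → u ≠ v → (G.commonNeighbors u v).Nonempty :=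
    fun _ _ => commonNeighbors_nonempty hL1 hlf c hconn hz
  obtain ⟨w, hw⟩ := (Set.ncard_pos (hlf z)).mp (by omega)
  have : Finite V := finite_of_forall_commonNeighbors_nonempty hlf c hcommon hw
  by_cases h0 : ∀ x, c.missingNeighbors x = ∅
  · exact (c.exists_iso_completeBipartiteGraph hL1 hcommon h0).imp_right .inl
  push Not at h0
  obtain ⟨x₀, y₀, hy₀⟩ := h0
  by_cases h1 : ∀ x, x ≠ x₀ → x ≠ y₀ → c.missingNeighbors x = ∅
  · exact .inr (.inr (.inl (c.exists_iso_knnMinusEdge hL1 hcommon hconn hy₀ h1)))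
  push Not at h1
  obtain ⟨x₁, h₁₀, h₁y, hx₁⟩ := h1
  exact .inr (.inr (.inr (c.exists_iso_knnMinusMatching hL1 hcommon hy₀ hx₁ h₁₀ h₁y)))
end
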